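/- Let a > 0 and 0 < m < M < ∞. For every D ∈ Sym3 with m < |D| < M and every E ∈ Sym3, one has (M^a − |D|^a)^{1+1/a} |L(D,E)|² ≤ max{α(D), β(D)} · Q(D,E). -/
import Mathlib


noncomputable section

/-- Frobenius inner product on 3×3 real matrices: `A·B = Σ_{i,j} A_{ij} B_{ij}`. -/
def mdot (A B : Matrix (Fin 3) (Fin 3) ℝ) : ℝ := ∑ i, ∑ j, A i j * B i j

/-- Frobenius norm `|A| = (A·A)^{1/2}`. -/
def mnorm (A : Matrix (Fin 3) (Fin 3) ℝ) : ℝ := Real.sqrt (mdot A A)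

lemma mdot_self_nonneg (A : Matrix (Fin 3) (Fin 3) ℝ) : 0 ≤ mdot A A :=
  Finset.sum_nonneg fun i _ => Finset.sum_nonneg fun j _ => mul_self_nonneg _

lemma mnorm_sq (A : Matrix (Fin 3) (Fin 3) ℝ) : mnorm A ^ 2 = mdot A A :=
  Real.sq_sqrt (mdot_self_nonneg A)

lemma mdot_expand (x y : ℝ) (D E : Matrix (Fin 3) (Fin 3) ℝ) :
    mdot (x • E + y • D) (x • E + y • D) =
      x ^ 2 * mdot E E + 2 * x * y * mdot D E + y ^ 2 * mdot D D := by
  simp only [mdot, Matrix.add_apply, Matrix.smul_apply, smul_eq_mul, Finset.mul_sum,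
    ← Finset.sum_add_distrib]
  exact Finset.sum_congr rfl fun i _ => Finset.sum_congr rfl fun j _ => by ring

/-- `L(D,E) = (|D|−m)(M^a−|D|^a)^{−1/a}E/|D|
      + ((|D|−m)|D|^a + m(M^a−|D|^a))(M^a−|D|^a)^{−1−1/a}|D|^{−3}(D·E)D`. -/
def Lmap (a m M : ℝ) (D E : Matrix (Fin 3) (Fin 3) ℝ) : Matrix (Fin 3) (Fin 3) ℝ :=
  ((mnorm D - m) * (M ^ a - mnorm D ^ a) ^ (-1/a) / mnorm D) • E +
    (((mnorm D - m) * mnorm D ^ a + m * (M ^ a - mnorm D ^ a)) *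
      (M ^ a - mnorm D ^ a) ^ (-1 - 1/a) * mdot D E / mnorm D ^ 3) • D

/-- `Q(D,E) = (|D|−m)(M^a−|D|^a)^{−1/a}|E|²/|D|
      + ((|D|−m)|D|^a + m(M^a−|D|^a))(M^a−|D|^a)^{−1−1/a}|D|^{−3}(D·E)²`. -/
def Qmap (a m M : ℝ) (D E : Matrix (Fin 3) (Fin 3) ℝ) : ℝ :=
  (mnorm D - m) * (M ^ a - mnorm D ^ a) ^ (-1/a) * mnorm E ^ 2 / mnorm D +
    ((mnorm D - m) * mnorm D ^ a + m * (M ^ a - mnorm D ^ a)) *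
      (M ^ a - mnorm D ^ a) ^ (-1 - 1/a) * (mdot D E) ^ 2 / mnorm D ^ 3

/-- `α(D) = |D|^{−1}(|D|−m)(M^a−|D|^a)`. -/
def alphaF (a m M : ℝ) (D : Matrix (Fin 3) (Fin 3) ℝ) : ℝ :=
  (mnorm D)⁻¹ * (mnorm D - m) * (M ^ a - mnorm D ^ a)

/-- `β(D) = |D|^{−1}(2(|D|−m)(M^a−|D|^a) + (|D|−m)|D|^a + m(M^a−|D|^a))`. -/
def betaF (a m M : ℝ) (D : Matrix (Fin 3) (Fin 3) ℝ) : ℝ :=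
  (mnorm D)⁻¹ * (2 * (mnorm D - m) * (M ^ a - mnorm D ^ a) +
    (mnorm D - m) * mnorm D ^ a + m * (M ^ a - mnorm D ^ a))

/-- For `m < |D| < M`:
`(M^a − |D|^a)^{1+1/a} |L(D,E)|² ≤ max{α(D), β(D)} · Q(D,E)`. -/
theorem Lmap_sq_le (a m M : ℝ) (ha : 0 < a) (hm : 0 < m) (hmM : m < M)
    (D E : Matrix (Fin 3) (Fin 3) ℝ) (hD : D.IsSymm) (hE : E.IsSymm)
    (h₁ : m < mnorm D) (h₂ : mnorm D < M) :
    (M ^ a - mnorm D ^ a) ^ (1 + 1/a) * mnorm (Lmap a m M D E) ^ 2 ≤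
      max (alphaF a m M D) (betaF a m M D) * Qmap a m M D E := by
  have hd0 : 0 < mnorm D := hm.trans h₁
  have hda : 0 < mnorm D ^ a := Real.rpow_pos_of_pos hd0 a
  have ht : 0 < M ^ a - mnorm D ^ a := sub_pos.mpr (Real.rpow_lt_rpow hd0.le h₂ ha)
  have hv : 0 < (M ^ a - mnorm D ^ a) ^ (-1 - 1/a) := Real.rpow_pos_of_pos ht _
  have hu : (M ^ a - mnorm D ^ a) ^ (-1/a) =
      (M ^ a - mnorm D ^ a) * (M ^ a - mnorm D ^ a) ^ (-1 - 1/a) := by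
    rw [show (-1/a : ℝ) = 1 + (-1 - 1/a) by ring, Real.rpow_add ht, Real.rpow_one]
  have hw : (M ^ a - mnorm D ^ a) ^ (1 + 1/a) =
      ((M ^ a - mnorm D ^ a) ^ (-1 - 1/a))⁻¹ := by
    rw [show (1 + 1/a : ℝ) = -(-1 - 1/a) by ring, Real.rpow_neg ht.le]
  have hdm : (0:ℝ) ≤ mnorm D - m := by linarith
  have hab : alphaF a m M D ≤ betaF a m M D := by
    unfold alphaF betaF
    have h3 : (0:ℝ) ≤ (mnorm D)⁻¹ := inv_nonneg.2 hd0.le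
    nlinarith [mul_nonneg h3 (add_nonneg (add_nonneg (mul_nonneg hdm ht.le)
      (mul_nonneg hdm hda.le)) (mul_nonneg hm.le ht.le))]
  rw [max_eq_right hab]
  unfold Lmap Qmap betaF
  rw [mnorm_sq, mdot_expand, mnorm_sq, ← mnorm_sq D, hu, hw]
  rw [← sub_nonneg]
  have h9 : (0:ℝ) ≤ ((mnorm D - m) * (M ^ a - mnorm D ^ a) +
      ((mnorm D - m) * mnorm D ^ a + m * (M ^ a - mnorm D ^ a))) *
      ((mnorm D - m) * (M ^ a - mnorm D ^ a) *
        (M ^ a - mnorm D ^ a) ^ (-1 - 1/a) * mdot E E) / mnorm D ^ 2 := by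
    apply div_nonneg _ (by positivity)
    exact mul_nonneg
      (add_nonneg (mul_nonneg hdm ht.le)
        (add_nonneg (mul_nonneg hdm hda.le) (mul_nonneg hm.le ht.le)))
      (mul_nonneg (mul_nonneg (mul_nonneg hdm ht.le) hv.le) (mdot_self_nonneg E))
  convert h9 using 1
  field_simp
  ring
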